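/- arXiv:2209.00091 — 5 statements merged into one kernel-verified Lean document; each statement's English description precedes it below -/
import Mathlib

section
/- Let G be a group and G₀ a normal solvable subgroup of finite index in G. Then every nilpotent normal subgroup N of G₀ is contained in the Fitting subgroup of G (the subgroup generated by all nilpotent normal subgroups of G). -/
/-- The Fitting subgroup of `G`: the subgroup generated by all nilpotent normal
subgroups of `G`. -/
def fittingSubgroup (G : Type*) [Group G] : Subgroup G :=
  sSup {N : Subgroup G | N.Normal ∧ Group.IsNilpotent N}

/-!
The conjugates of `N` under `G` are normal nilpotent subgroups of `G₀`, and since `G₀` normalises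
`N` there are at most `[G : G₀]` of them. By Fitting's theorem their join is nilpotent, and it is
normalised by `G`, so its image in `G` lies in the Fitting subgroup.

Fitting's theorem for two normal subgroups `H` and `K` follows from
`γ_{i+j}(H ⊔ K) ≤ γ_i(H) ⊔ γ_j(K)`, where `γ` is the lower central series computed in the ambient
group. This is proved by induction on `i + j`, using that commutator subgroups of normal subgroups
distribute over joins.
-/

open Pointwise

theorem MulAction.finite_orbit_of_finiteIndex_stabilizer {α X : Type*} [Group α] [MulAction α X]
    (x : X) [(stabilizer α x).FiniteIndex] : (orbit α x).Finite :=
  Set.finite_of_ncard_ne_zero (index_stabilizer α x ▸ Subgroup.FiniteIndex.index_ne_zero)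

namespace Subgroup

variable {G : Type*} [Group G]

theorem commutator_sup_right_le {X H K : Subgroup G} [X.Normal] [H.Normal] [K.Normal] :
    ⁅X, H ⊔ K⁆ ≤ ⁅X, H⁆ ⊔ ⁅X, K⁆ := by
  set π := QuotientGroup.mk' (⁅X, H⁆ ⊔ ⁅X, K⁆)
  have hπ (L : Subgroup G) : ⁅X, L⁆ ≤ ⁅X, H⁆ ⊔ ⁅X, K⁆ ↔ ⁅X.map π, L.map π⁆ = ⊥ := by
    rw [← map_commutator, map_eq_bot_iff, QuotientGroup.ker_mk']
  rw [hπ, commutator_comm (X.map π), commutator_eq_bot_iff_le_centralizer, map_sup]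
  refine sup_le ?_ ?_ <;>
    rw [← commutator_eq_bot_iff_le_centralizer, commutator_comm _ (X.map π), ← hπ]
  exacts [le_sup_left, le_sup_right]

theorem commutator_sup_left_le {X H K : Subgroup G} [X.Normal] [H.Normal] [K.Normal] :
    ⁅H ⊔ K, X⁆ ≤ ⁅H, X⁆ ⊔ ⁅K, X⁆ := by
  simpa only [commutator_comm _ X] using commutator_sup_right_le (X := X) (H := H) (K := K)

theorem commutator_le_lowerCentralSeries_succ_sup {X H K : Subgroup G} [H.Normal] [K.Normal]
    {i j : ℕ} (hX : X ≤ H.lowerCentralSeries i ⊔ K.lowerCentralSeries j) :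
    ⁅X, H⁆ ≤ H.lowerCentralSeries (i + 1) ⊔ K.lowerCentralSeries j :=
  calc ⁅X, H⁆ ≤ ⁅H.lowerCentralSeries i ⊔ K.lowerCentralSeries j, H⁆ := commutator_mono hX le_rfl
    _ ≤ ⁅H.lowerCentralSeries i, H⁆ ⊔ ⁅K.lowerCentralSeries j, H⁆ := commutator_sup_left_le
    _ ≤ H.lowerCentralSeries (i + 1) ⊔ K.lowerCentralSeries j :=
      sup_le_sup_left (commutator_le_left _ _) _

theorem lowerCentralSeries_sup_le {H K : Subgroup G} [H.Normal] [K.Normal] (i j : ℕ) :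
    (H ⊔ K).lowerCentralSeries (i + j) ≤ H.lowerCentralSeries i ⊔ K.lowerCentralSeries j := by
  induction hn : i + j generalizing i j with
  | zero =>
    obtain ⟨rfl, rfl⟩ : i = 0 ∧ j = 0 := by omega
    simp
  | succ n ih =>
    rw [lowerCentralSeries_succ]
    refine commutator_sup_right_le.trans (sup_le ?_ ?_)
    · cases i with
      | zero => exact (commutator_le_right _ H).trans le_sup_left
      | succ i => exact commutator_le_lowerCentralSeries_succ_sup (ih i j (by omega))
    · cases j with
      | zero => exact (commutator_le_right _ K).trans le_sup_right
      | succ j =>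
        rw [sup_comm (H.lowerCentralSeries i)]
        exact commutator_le_lowerCentralSeries_succ_sup
          ((ih i j (by omega)).trans_eq (sup_comm _ _))

theorem isNilpotent_sup {H K : Subgroup G} [H.Normal] [K.Normal] (hH : Group.IsNilpotent H)
    (hK : Group.IsNilpotent K) : Group.IsNilpotent ↥(H ⊔ K) := by
  rw [isNilpotent_iff_lowerCentralSeries] at *
  obtain ⟨c, hc⟩ := hH
  obtain ⟨d, hd⟩ := hK
  refine ⟨c + d, le_bot_iff.mp ?_⟩
  simpa only [hc, hd, sup_bot_eq] using lowerCentralSeries_sup_le (H := H) (K := K) c d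

theorem isNilpotent_sSup_of_finite {S : Set (Subgroup G)} (hS : S.Finite)
    (h : ∀ H ∈ S, H.Normal ∧ Group.IsNilpotent H) : Group.IsNilpotent ↥(sSup S) := by
  induction S, hS using Set.Finite.induction_on with
  | empty =>
    rw [sSup_empty]
    exact Group.isNilpotent_of_subsingleton
  | @insert H S _ _ ih =>
    rw [sSup_insert]
    obtain ⟨hHnormal, hH⟩ := h H (Set.mem_insert H S)
    have hS (K : Subgroup G) (hK : K ∈ S) := h K (Set.mem_insert_of_mem H hK)
    have := sSup_normal S fun K hK => (hS K hK).1
    exact isNilpotent_sup hH (ih hS)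

theorem Normal.smul {α : Type*} [Group α] [MulDistribMulAction α G] {H : Subgroup G}
    (hH : H.Normal) (a : α) : (a • H).Normal := by
  rw [pointwise_smul_def]
  exact hH.map _ fun y => ⟨a⁻¹ • y, smul_inv_smul a y⟩

theorem smul_sSup_orbit_le {α : Type*} [Group α] [MulDistribMulAction α G] (a : α)
    (K : Subgroup G) : a • sSup (MulAction.orbit α K) ≤ sSup (MulAction.orbit α K) := by
  rw [pointwise_smul_subset_iff]
  refine sSup_le fun L hL => ?_
  obtain ⟨b, rfl⟩ := hL
  exact pointwise_smul_subset_iff.mp (le_sSup ⟨a * b, mul_smul a b K⟩)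

theorem toConjAct_coe_smul {H : Subgroup G} [H.Normal] (h : H) (K : Subgroup H) :
    ConjAct.toConjAct (h : G) • K = ConjAct.toConjAct h • K :=
  rfl

theorem comap_ofConjAct_le_stabilizer {H : Subgroup G} [H.Normal] {K : Subgroup H}
    (hK : K.Normal) :
    H.comap (ConjAct.ofConjAct : ConjAct G ≃* G).toMonoidHom ≤
      MulAction.stabilizer (ConjAct G) K := by
  intro g hg
  rw [MulAction.mem_stabilizer_iff, ← ConjAct.toConjAct_ofConjAct g]
  exact (toConjAct_coe_smul ⟨_, hg⟩ K).trans (hK.conjAct _)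

theorem finite_orbit_conjAct {H : Subgroup G} [H.Normal] [H.FiniteIndex] {K : Subgroup H}
    (hK : K.Normal) : (MulAction.orbit (ConjAct G) K).Finite := by
  have : (H.comap (ConjAct.ofConjAct : ConjAct G ≃* G).toMonoidHom).FiniteIndex :=
    ⟨(index_comap_of_surjective H (f := ConjAct.ofConjAct.toMonoidHom)
      ConjAct.ofConjAct.surjective).symm ▸ FiniteIndex.index_ne_zero⟩
  have := finiteIndex_of_le (comap_ofConjAct_le_stabilizer hK)
  exact MulAction.finite_orbit_of_finiteIndex_stabilizer K

theorem normal_map_subtype_of_conjAct_smul_le {H : Subgroup G} [H.Normal] {K : Subgroup H}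
    (hK : ∀ g : ConjAct G, g • K ≤ K) : (K.map H.subtype).Normal :=
  ⟨by
    rintro _ ⟨k, hk, rfl⟩ g
    exact ⟨ConjAct.toConjAct g • k, hK _ (smul_mem_pointwise_smul _ _ _ hk), rfl⟩⟩

end Subgroup

open Subgroup

theorem nilpotent_normal_of_finiteIndex_solvable_le_fitting_general
    {G : Type*} [Group G] (G₀ : Subgroup G) (hnorm : G₀.Normal)
    (hfin : G₀.FiniteIndex)
    (N : Subgroup G₀) (hNnorm : N.Normal) (hNnil : Group.IsNilpotent N) :
    N.map G₀.subtype ≤ fittingSubgroup G := by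
  let M := sSup (MulAction.orbit (ConjAct G) N)
  have hM : Group.IsNilpotent M := by
    refine isNilpotent_sSup_of_finite (finite_orbit_conjAct hNnorm) ?_
    rintro _ ⟨g, rfl⟩
    exact ⟨hNnorm.smul g, Group.nilpotent_of_mulEquiv (equivSMul g N)⟩
  have hNM : N ≤ M := le_sSup (MulAction.mem_orbit_self (M := ConjAct G) N)
  refine (map_mono hNM).trans (le_sSup ⟨?_, ?_⟩)
  · exact normal_map_subtype_of_conjAct_smul_le fun g => smul_sSup_orbit_le g N
  · exact Group.nilpotent_of_mulEquiv (equivMapOfInjective M _ G₀.subtype_injective)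

/-- If `G₀` is a normal solvable subgroup of finite index in `G`, then every nilpotent
normal subgroup `N` of `G₀` is contained in the Fitting subgroup of `G`. -/
theorem nilpotent_normal_of_finiteIndex_solvable_le_fitting
    {G : Type*} [Group G] (G₀ : Subgroup G) (hnorm : G₀.Normal)
    (hfin : G₀.FiniteIndex) (hsolv : IsSolvable G₀)
    (N : Subgroup G₀) (hNnorm : N.Normal) (hNnil : Group.IsNilpotent N) :
    N.map G₀.subtype ≤ fittingSubgroup G :=
  nilpotent_normal_of_finiteIndex_solvable_le_fitting_general G₀ hnorm hfin N hNnorm hNnil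
end

section
/- The subgroup of a group G generated by two nilpotent normal subgroups N and M of G is again a nilpotent normal subgroup of G (Fitting's theorem for two subgroups). -/
/-!
Let `γₖ(H)` be the lower central series of `H` computed in `G`, with `γ₀(H) = H`. Heuristically
`γₙ(N ⊔ M)` is made of commutators with `n + 1` entries from `N` or `M`, and if `i + j = n` such a
commutator has more than `i` entries from `N` or more than `j` from `M`. This gives
`γₙ(N ⊔ M) ≤ γᵢ(N) ⊔ γⱼ(M)`, proved by induction on `n` since commutators with `N` or `M` distribute
over joins modulo any normal subgroup. If `γₐ(N) = γ_b(M) = ⊥`, then `γ_{a+b}(N ⊔ M) = ⊥`.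
-/

namespace Subgroup

variable {G : Type*} [Group G]

theorem commutator_le_iff_le_comap_centralizer {H K R : Subgroup G} [R.Normal] :
    ⁅H, K⁆ ≤ R ↔
      H ≤ (centralizer (K.map (QuotientGroup.mk' R) : Set (G ⧸ R))).comap (QuotientGroup.mk' R) := by
  rw [← map_le_iff_le_comap, ← commutator_eq_bot_iff_le_centralizer, ← map_commutator,
    map_eq_bot_iff, QuotientGroup.ker_mk']

theorem commutator_sup_left_le_iff {H₁ H₂ K R : Subgroup G} [R.Normal] :
    ⁅H₁ ⊔ H₂, K⁆ ≤ R ↔ ⁅H₁, K⁆ ≤ R ∧ ⁅H₂, K⁆ ≤ R := by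
  simp only [commutator_le_iff_le_comap_centralizer, sup_le_iff]

theorem commutator_sup_right_le_iff {H K₁ K₂ R : Subgroup G} [R.Normal] :
    ⁅H, K₁ ⊔ K₂⁆ ≤ R ↔ ⁅H, K₁⁆ ≤ R ∧ ⁅H, K₂⁆ ≤ R := by
  simp only [commutator_comm H, commutator_sup_left_le_iff]

theorem commutator_le_lowerCentralSeries_succ_sup_s1 {N M X : Subgroup G} [N.Normal] [M.Normal]
    {i j : ℕ} (h : X ≤ N.lowerCentralSeries i ⊔ M.lowerCentralSeries j) :
    ⁅X, N⁆ ≤ N.lowerCentralSeries (i + 1) ⊔ M.lowerCentralSeries j :=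
  (commutator_mono h le_rfl).trans <| commutator_sup_left_le_iff.mpr
    ⟨le_sup_left, (commutator_le_left _ _).trans le_sup_right⟩

theorem lowerCentralSeries_sup_le_s1 (N M : Subgroup G) [N.Normal] [M.Normal] {i j n : ℕ}
    (hij : i + j = n) :
    (N ⊔ M).lowerCentralSeries n ≤ N.lowerCentralSeries i ⊔ M.lowerCentralSeries j := by
  induction n generalizing i j with
  | zero =>
    obtain ⟨rfl, rfl⟩ := Nat.add_eq_zero_iff.mp hij
    rfl
  | succ n ih =>
    rw [lowerCentralSeries_succ, commutator_sup_right_le_iff]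
    constructor
    · cases i with
      | zero => exact (commutator_le_right _ _).trans le_sup_left
      | succ i => exact commutator_le_lowerCentralSeries_succ_sup_s1 (ih (i := i) (j := j) (by omega))
    · cases j with
      | zero => exact (commutator_le_right _ _).trans le_sup_right
      | succ j =>
        rw [sup_comm (N.lowerCentralSeries i)]
        exact commutator_le_lowerCentralSeries_succ_sup_s1
          ((ih (i := i) (j := j) (by omega)).trans_eq (sup_comm _ _))

end Subgroup

/-- Fitting's theorem for two subgroups: the subgroup generated by two nilpotent
normal subgroups of a group `G` is again a nilpotent normal subgroup of `G`. -/
theorem fitting_sup_of_two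
    {G : Type*} [Group G] (N M : Subgroup G) (hN : N.Normal) (hM : M.Normal)
    (hNnil : Group.IsNilpotent N) (hMnil : Group.IsNilpotent M) :
    Group.IsNilpotent ↥(N ⊔ M) ∧ (N ⊔ M).Normal := by
  have := hN
  have := hM
  refine ⟨?_, Subgroup.sup_normal N M⟩
  obtain ⟨a, ha⟩ := N.isNilpotent_iff_lowerCentralSeries.mp hNnil
  obtain ⟨b, hb⟩ := M.isNilpotent_iff_lowerCentralSeries.mp hMnil
  refine Subgroup.isNilpotent_of_lowerCentralSeries_eq_bot (n := a + b) (le_bot_iff.mp ?_)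
  simpa [ha, hb] using Subgroup.lowerCentralSeries_sup_le_s1 N M (rfl : a + b = _)
end

section
/- Let N be a group of elliptic automorphisms of a directed tree (𝕋, ⊴). Then the quotient relation on 𝕋 defined by x ⊴ y iff there exist v in the N-orbit of x and w in the N-orbit of y with v ⊴ w, is a partial order on the set of N-orbits 𝕋/N. -/
/-- A directed tree: a poset in which every up-set `{u | v ⊴ u}` is totally ordered and
order-isomorphic to `[0, ∞)`, every pair of points has a smallest common upper bound, and
there is a countable subset order-dense in every segment. -/
structure IsDirectedTree (T : Type*) [PartialOrder T] : Prop where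
  ray_iso : ∀ v : T, Nonempty ({u : T // v ≤ u} ≃o {x : ℝ // 0 ≤ x})
  lub : ∀ u v : T, ∃ w : T, u ≤ w ∧ v ≤ w ∧ ∀ z : T, u ≤ z → v ≤ z → w ≤ z
  countable_dense : ∃ S : Set T, S.Countable ∧ ∀ u v : T, u < v → ∃ z ∈ S, u ≤ z ∧ z ≤ v

/-- The quotient relation on `𝕋/N` induced by `⊴`: `x ⊴ y` iff some element of the
`N`-orbit of `x` is `⊴` some element of the `N`-orbit of `y`. -/
def QRel {T : Type*} [PartialOrder T] (N : Subgroup (T ≃o T)) (x y : T) : Prop :=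
  ∃ g ∈ N, ∃ h ∈ N, g x ≤ h y

namespace QRel

variable {T : Type*} [PartialOrder T] {N : Subgroup (T ≃o T)} {x y z : T}

theorem iff_exists_le : QRel N x y ↔ ∃ k ∈ N, k x ≤ y := by
  constructor
  · rintro ⟨g, hg, h, hh, hle⟩
    exact ⟨h⁻¹ * g, mul_mem (inv_mem hh) hg, (OrderIso.symm_apply_le h).mpr hle⟩
  · rintro ⟨k, hk, hle⟩
    exact ⟨k, hk, 1, one_mem N, hle⟩

theorem refl (x : T) : QRel N x x :=
  iff_exists_le.mpr ⟨1, one_mem N, le_rfl⟩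

theorem trans (hxy : QRel N x y) (hyz : QRel N y z) : QRel N x z := by
  obtain ⟨k, hk, hkx⟩ := iff_exists_le.mp hxy
  obtain ⟨m, hm, hmy⟩ := iff_exists_le.mp hyz
  exact iff_exists_le.mpr ⟨m * k, mul_mem hm hk, (m.monotone hkx).trans hmy⟩

/-- The chain `(m * k) x ≤ m y ≤ x` is collapsed by ellipticity of `m * k`. -/
theorem antisymm_of_elliptic (hell : ∀ g ∈ N, ∀ v : T, g v ≤ v → g v = v)
    (hxy : QRel N x y) (hyx : QRel N y x) : ∃ g ∈ N, g x = y := by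
  obtain ⟨k, hk, hkx⟩ := iff_exists_le.mp hxy
  obtain ⟨m, hm, hmy⟩ := iff_exists_le.mp hyx
  have hfix : m (k x) = x := hell (m * k) (mul_mem hm hk) x ((m.monotone hkx).trans hmy)
  have hykx : y ≤ k x := m.le_iff_le.mp (hmy.trans_eq hfix.symm)
  exact ⟨k, hk, hkx.antisymm hykx⟩

end QRel

theorem quotient_relation_partialOrder_of_elliptic_general
    {T : Type*} [PartialOrder T]
    (N : Subgroup (T ≃o T))
    (hell : ∀ g ∈ N, ∀ v : T, g v ≤ v → g v = v) :
    (∀ x : T, QRel N x x) ∧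
    (∀ x y z : T, QRel N x y → QRel N y z → QRel N x z) ∧
    (∀ x y : T, QRel N x y → QRel N y x → ∃ g ∈ N, g x = y) :=
  ⟨QRel.refl, fun _ _ _ => QRel.trans, fun _ _ => QRel.antisymm_of_elliptic hell⟩

/-- Let `N` be a group of elliptic automorphisms of a directed tree `(𝕋, ⊴)`. Then the
quotient relation on `𝕋/N` (`x ⊴ y` iff representatives of the orbits are comparable) is
a partial order on the set of `N`-orbits: it is reflexive, transitive, and antisymmetric
modulo `N`-orbits. -/
theorem quotient_relation_partialOrder_of_elliptic
    {T : Type*} [PartialOrder T] (hT : IsDirectedTree T)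
    (N : Subgroup (T ≃o T))
    (hell : ∀ g ∈ N, ∀ v : T, g v ≤ v → g v = v) :
    (∀ x : T, QRel N x x) ∧
    (∀ x y z : T, QRel N x y → QRel N y z → QRel N x z) ∧
    (∀ x y : T, QRel N x y → QRel N y x → ∃ g ∈ N, g x = y) :=
  quotient_relation_partialOrder_of_elliptic_general N hell
end

section
/- Let (𝕋, ⊴) be a directed tree and let N be a group of elliptic automorphisms of 𝕋. Fix v ∈ 𝕋 and let x denote the N-orbit of v. Then the quotient projection π : 𝕋 → 𝕋/N restricts to an order-isomorphism from the ray [v, ∞) = {w : v ⊴ w} onto the up-set {y ∈ 𝕋/N : x ⊴ y}, where 𝕋/N carries the quotient order (x₁ ⊴ x₂ iff some representatives are comparable). -/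
theorem IsDirectedTree.le_total_of_ge {T : Type*} [PartialOrder T] (hT : IsDirectedTree T)
    {v a b : T} (ha : v ≤ a) (hb : v ≤ b) : a ≤ b ∨ b ≤ a := by
  obtain ⟨e⟩ := hT.ray_iso v
  exact (le_total (e ⟨a, ha⟩) (e ⟨b, hb⟩)).imp e.le_iff_le.mp e.le_iff_le.mp

section QRel

variable {T : Type*} [PartialOrder T] {N : Subgroup (T ≃o T)} {x y : T}

theorem qRel_iff_exists_apply_le : QRel N x y ↔ ∃ g ∈ N, g x ≤ y := by
  constructor
  · rintro ⟨g, hg, h, hh, hle⟩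
    refine ⟨h⁻¹ * g, mul_mem (inv_mem hh) hg, ?_⟩
    simpa only [RelIso.mul_apply, RelIso.inv_apply_self] using (h⁻¹ : T ≃o T).monotone hle
  · rintro ⟨g, hg, hle⟩
    exact ⟨g, hg, 1, one_mem N, hle⟩

theorem qRel_iff_exists_le_apply : QRel N x y ↔ ∃ g ∈ N, x ≤ g y := by
  constructor
  · rintro ⟨g, hg, h, hh, hle⟩
    refine ⟨g⁻¹ * h, mul_mem (inv_mem hg) hh, ?_⟩
    simpa only [RelIso.mul_apply, RelIso.inv_apply_self] using (g⁻¹ : T ≃o T).monotone hle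
  · rintro ⟨g, hg, hle⟩
    exact ⟨1, one_mem N, g, hg, hle⟩

end QRel

section Elliptic

variable {T : Type*} [PartialOrder T] {N : Subgroup (T ≃o T)}
  (hell : ∀ g ∈ N, ∀ v : T, g v ≤ v → g v = v) {g : T ≃o T} {w : T}
include hell

theorem apply_eq_of_le_apply (hg : g ∈ N) (h : w ≤ g w) : g w = w := by
  have hinv : g⁻¹ (g w) ≤ g w := by rwa [RelIso.inv_apply_self]
  have := hell g⁻¹ (inv_mem hg) (g w) hinv
  rw [RelIso.inv_apply_self] at this
  exact this.symm

theorem apply_eq_of_comparable (hg : g ∈ N) (h : w ≤ g w ∨ g w ≤ w) : g w = w :=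
  h.elim (apply_eq_of_le_apply hell hg) (hell g hg w)

end Elliptic

/-- Let `N` be a group of elliptic automorphisms of a directed tree `(𝕋, ⊴)` and fix
`v ∈ 𝕋`. The quotient projection `π : 𝕋 → 𝕋/N` restricts to an order-isomorphism from the
ray `[v, ∞) = {w | v ⊴ w}` onto the up-set of the orbit of `v` in `𝕋/N`: it is injective
on the ray, its image is the whole up-set, and it preserves and reflects the order. -/
theorem quotient_projection_ray_orderIso_of_elliptic
    {T : Type*} [PartialOrder T] (hT : IsDirectedTree T)
    (N : Subgroup (T ≃o T))
    (hell : ∀ g ∈ N, ∀ v : T, g v ≤ v → g v = v) (v : T) :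
    (∀ w₁ w₂ : T, v ≤ w₁ → v ≤ w₂ → (∃ g ∈ N, g w₁ = w₂) → w₁ = w₂) ∧
    (∀ u : T, QRel N v u → ∃ w : T, v ≤ w ∧ ∃ g ∈ N, g u = w) ∧
    (∀ w₁ w₂ : T, v ≤ w₁ → v ≤ w₂ → (w₁ ≤ w₂ ↔ QRel N w₁ w₂)) := by
  refine ⟨?_, ?_, ?_⟩
  · rintro w₁ w₂ h₁ h₂ ⟨g, hg, rfl⟩
    exact (apply_eq_of_comparable hell hg (hT.le_total_of_ge h₁ h₂)).symm
  · intro u hu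
    obtain ⟨g, hg, hle⟩ := qRel_iff_exists_le_apply.mp hu
    exact ⟨g u, hle, g, hg, rfl⟩
  · intro w₁ w₂ h₁ h₂
    refine ⟨fun h ↦ qRel_iff_exists_apply_le.mpr ⟨1, one_mem N, h⟩, fun hq ↦ ?_⟩
    obtain ⟨g, hg, hle⟩ := qRel_iff_exists_apply_le.mp hq
    rcases hT.le_total_of_ge h₁ h₂ with h | h
    · exact h
    · rwa [← hell g hg w₁ (hle.trans h)]
end

section
/- Let φ : G → Homeo₊(ℝ) be a faithful minimal action of a group G, and let a, s ∈ G be such that: s has at least one fixed point under φ, the fixed point set of φ(a) is disjoint from the fixed point set of φ(s), and the conjugates sⁿ a s⁻ⁿ (n ∈ ℤ) pairwise commute. Then there is a well-defined group homomorphism ρ : ℤ ≀ ℤ → G sending the standard generators h₀ ↦ a and g ↦ s, and the subgroup ⟨a, s⟩ acts on ℝ without global fixed points. -/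
/-! The lamplighter group `ℤ ≀ ℤ = (⊕_ℤ ℤ) ⋊ ℤ`. -/

/-- The base group `L = ⊕_ℤ ℤ` of finitely supported configurations `ℤ → ℤ`,
written multiplicatively. -/
abbrev LampBase := Multiplicative (ℤ →₀ ℤ)

/-- The shift of configurations by `n`. -/
noncomputable def shiftEquiv (n : ℤ) : LampBase ≃* LampBase :=
  AddEquiv.toMultiplicative (Finsupp.domCongr (M := ℤ) (Equiv.addRight n))

/-- The shift action of `ℤ` on `L = ⊕_ℤ ℤ`. -/
noncomputable def lampShift : Multiplicative ℤ →* MulAut LampBase where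
  toFun n := shiftEquiv n.toAdd
  map_one' := by
    refine MulEquiv.ext fun f => Multiplicative.toAdd.injective ?_
    refine Finsupp.ext fun k => ?_
    simp [shiftEquiv, Finsupp.domCongr_apply, Finsupp.equivMapDomain_apply]
    rfl
  map_mul' m n := by
    refine MulEquiv.ext fun f => Multiplicative.toAdd.injective ?_
    refine Finsupp.ext fun k => ?_
    simp [shiftEquiv, Finsupp.domCongr_apply, Finsupp.equivMapDomain_apply, MulAut.mul_def]
    congr 1
    simp [Equiv.Perm.mul_def, Equiv.symm_trans_apply]
    ring

/-- The lamplighter group `ℤ ≀ ℤ = (⊕_ℤ ℤ) ⋊ ℤ`. -/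
noncomputable abbrev Lamplighter := LampBase ⋊[lampShift] Multiplicative ℤ

/-- The standard generator `h₀` of `ℤ ≀ ℤ` (the configuration `δ₀`). -/
noncomputable def lampH₀ : Lamplighter :=
  SemidirectProduct.inl (Multiplicative.ofAdd (Finsupp.single 0 1))

/-- The standard generator `g` of `ℤ ≀ ℤ` (the shift). -/
noncomputable def lampG : Lamplighter :=
  SemidirectProduct.inr (Multiplicative.ofAdd 1)

/-! Since the conjugates `cₙ = sⁿ a s⁻ⁿ` commute pairwise, they generate an abelian subgroup, so
`δₙ ↦ cₙ` extends to a homomorphism on `⊕_ℤ ℤ`. As `c_{n+m} = sᵐ cₙ s⁻ᵐ`, this homomorphism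
intertwines the shift with conjugation by `s`, hence extends over `(⊕_ℤ ℤ) ⋊ ℤ`. A point fixed by
all of `⟨a, s⟩` would be fixed by both `a` and `s`. -/

section FinsuppLift

variable {ι G : Type*} [Group G]

open scoped IsMulCommutative in
noncomputable def finsuppLiftOfCommute (c : ι → G) (hc : ∀ i j, Commute (c i) (c j)) :
    Multiplicative (ι →₀ ℤ) →* G :=
  haveI := Subgroup.isMulCommutative_closure (k := Set.range c) <| by
    rintro _ ⟨i, rfl⟩ _ ⟨j, rfl⟩
    exact hc i j
  (Subgroup.closure (Set.range c)).subtype.comp <| AddMonoidHom.toMultiplicativeLeft <|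
    Finsupp.liftAddHom fun i =>
      zmultiplesHom _ (Additive.ofMul ⟨c i, Subgroup.subset_closure ⟨i, rfl⟩⟩)

theorem finsuppLiftOfCommute_single (c : ι → G) (hc : ∀ i j, Commute (c i) (c j))
    (i : ι) (k : ℤ) :
    finsuppLiftOfCommute c hc (Multiplicative.ofAdd (Finsupp.single i k)) = c i ^ k := by
  simp [finsuppLiftOfCommute]

end FinsuppLift

theorem shiftEquiv_single (n i k : ℤ) :
    shiftEquiv n (Multiplicative.ofAdd (Finsupp.single i k)) =
      Multiplicative.ofAdd (Finsupp.single (i + n) k) := by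
  simp [shiftEquiv]

section LamplighterLift

variable {G : Type*} [Group G]

theorem finsuppLiftOfCommute_comp_lampShift (c : ℤ → G) (hc : ∀ i j, Commute (c i) (c j))
    (s : G) (hcs : ∀ i n : ℤ, c (i + n) = s ^ n * c i * (s ^ n)⁻¹) (n : Multiplicative ℤ) :
    (finsuppLiftOfCommute c hc).comp (lampShift n).toMonoidHom =
      (MulAut.conj (zpowersHom G s n)).toMonoidHom.comp (finsuppLiftOfCommute c hc) := by
  refine Finsupp.mulHom_ext fun i k => ?_
  show finsuppLiftOfCommute c hc (shiftEquiv n.toAdd _) = MulAut.conj (s ^ n.toAdd) _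
  rw [shiftEquiv_single, finsuppLiftOfCommute_single, finsuppLiftOfCommute_single, hcs,
    MulAut.conj_apply, conj_zpow]

theorem zpow_conj_add (a s : G) (i n : ℤ) :
    s ^ (i + n) * a * s ^ (-(i + n)) = s ^ n * (s ^ i * a * s ^ (-i)) * (s ^ n)⁻¹ := by
  simp only [zpow_add, zpow_neg]
  group

noncomputable def lamplighterLift (a s : G)
    (hcomm : ∀ n m : ℤ, Commute (s ^ n * a * s ^ (-n)) (s ^ m * a * s ^ (-m))) :
    Lamplighter →* G :=
  SemidirectProduct.lift (finsuppLiftOfCommute _ hcomm) (zpowersHom G s)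
    (finsuppLiftOfCommute_comp_lampShift _ hcomm s (zpow_conj_add a s))

variable (a s : G) (hcomm : ∀ n m : ℤ, Commute (s ^ n * a * s ^ (-n)) (s ^ m * a * s ^ (-m)))

theorem lamplighterLift_lampH₀ : lamplighterLift a s hcomm lampH₀ = a := by
  simp [lamplighterLift, lampH₀, finsuppLiftOfCommute_single]

theorem lamplighterLift_lampG : lamplighterLift a s hcomm lampG = s := by
  simp [lamplighterLift, lampG]

end LamplighterLift

theorem lamplighter_hom_of_commuting_conjugates_general
    {G : Type*} [Group G] (φ : G →* (ℝ ≃o ℝ))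
    (a s : G)
    (hdisj : ∀ x : ℝ, φ a x = x → φ s x ≠ x)
    (hcomm : ∀ n m : ℤ, Commute (s ^ n * a * s ^ (-n)) (s ^ m * a * s ^ (-m))) :
    (∃ ρ : Lamplighter →* G, ρ lampH₀ = a ∧ ρ lampG = s) ∧
    ¬∃ x : ℝ, ∀ w ∈ Subgroup.closure {a, s}, φ w x = x :=
  ⟨⟨lamplighterLift a s hcomm, lamplighterLift_lampH₀ a s hcomm, lamplighterLift_lampG a s hcomm⟩,
    fun ⟨x, hx⟩ => hdisj x (hx a (Subgroup.subset_closure (Set.mem_insert a {s})))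
      (hx s (Subgroup.subset_closure (Set.mem_insert_of_mem a rfl)))⟩

/-- Let `φ` be a faithful minimal action of a group `G` on `ℝ` by orientation-preserving
homeomorphisms (modelled as order-isomorphisms of `ℝ`), and let `a, s ∈ G` be such that
`φ(s)` has at least one fixed point, the fixed point sets of `φ(a)` and `φ(s)` are
disjoint, and the conjugates `sⁿ a s⁻ⁿ` (`n ∈ ℤ`) pairwise commute. Then there is a
well-defined homomorphism `ρ : ℤ ≀ ℤ → G` with `ρ(h₀) = a` and `ρ(g) = s`, and the
subgroup `⟨a, s⟩` acts on `ℝ` without global fixed points. -/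
theorem lamplighter_hom_of_commuting_conjugates
    {G : Type*} [Group G] (φ : G →* (ℝ ≃o ℝ))
    (hfaith : Function.Injective φ)
    (hmin : ∀ x : ℝ, Dense (Set.range fun g : G => φ g x))
    (a s : G)
    (hs : ∃ x : ℝ, φ s x = x)
    (hdisj : ∀ x : ℝ, φ a x = x → φ s x ≠ x)
    (hcomm : ∀ n m : ℤ, Commute (s ^ n * a * s ^ (-n)) (s ^ m * a * s ^ (-m))) :
    (∃ ρ : Lamplighter →* G, ρ lampH₀ = a ∧ ρ lampG = s) ∧
    ¬∃ x : ℝ, ∀ w ∈ Subgroup.closure {a, s}, φ w x = x :=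
  lamplighter_hom_of_commuting_conjugates_general φ a s hdisj hcomm
end
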